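/- Let n ≥ 2, 0 < λ ≤ Λ < ∞, α ∈ (0,1), C, C̃ > 0, ε > 0, and let N ∈ ℕ satisfy N ≥ 4√(Λ/λ) and N > 2^{7/2} Λ √(Λ/λ) C. Let f(x,z) = C|x−z|^α + C̃|x+z|² and suppose x, z ∈ B_r(0) satisfy (x−z)/|x−z| = e₁ and |x−z| > N√λ·ε. Then for every pair of vectors h_x, h_z ∈ ℝⁿ with |h_x|, |h_z| ≤ √Λ·ε, one has f(x+h_x, z+h_z) − f(x,z) ≤ Cα|x−z|^{α−1} e₁ᵀ(h_x−h_z) + 2C̃(x+z)ᵀ(h_x+h_z) + (C/2)·α|x−z|^{α−2}·trace{ J_α (h_x−h_z)(h_x−h_z)ᵀ } + (16 C̃ Λ r^{2−α} + 1)|x−z|^{α−2} ε². -/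

import Mathlib

open MeasureTheory Matrix

noncomputable section

abbrev EucSp (n : ℕ) := EuclideanSpace ℝ (Fin n)

/-- Principal square root of a positive semidefinite matrix (zero otherwise). -/
noncomputable def msqrt {n : ℕ} (A : Matrix (Fin n) (Fin n) ℝ) : Matrix (Fin n) (Fin n) ℝ :=
  open scoped Classical in
  if h : A.PosSemidef then
    (h.1.eigenvectorUnitary : Matrix (Fin n) (Fin n) ℝ) *
      Matrix.diagonal ((↑) ∘ (Real.sqrt ·) ∘ h.1.eigenvalues) *
      (star h.1.eigenvectorUnitary : Matrix (Fin n) (Fin n) ℝ)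
  else 0

/-- `A ∈ 𝒜(λ,Λ)`: symmetric and uniformly elliptic. -/
def UnifElliptic {n : ℕ} (lam Lam : ℝ) (A : Matrix (Fin n) (Fin n) ℝ) : Prop :=
  A.IsSymm ∧ ∀ ξ : Fin n → ℝ,
    lam * (ξ ⬝ᵥ ξ) ≤ ξ ⬝ᵥ A.mulVec ξ ∧ ξ ⬝ᵥ A.mulVec ξ ≤ Lam * (ξ ⬝ᵥ ξ)

/-- Membership in the orthogonal group `O(n)`. -/
def IsOrthMat {n : ℕ} (Q : Matrix (Fin n) (Fin n) ℝ) : Prop :=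
  Q * Qᵀ = 1 ∧ Qᵀ * Q = 1

/-- Matrix acting on Euclidean space. -/
noncomputable def mvE {n : ℕ} (M : Matrix (Fin n) (Fin n) ℝ) (y : EucSp n) : EucSp n :=
  (EuclideanSpace.equiv (Fin n) ℝ).symm (M.mulVec ((EuclideanSpace.equiv (Fin n) ℝ) y))

/-- The ellipsoid `x + ε A^{1/2} 𝔹`. -/
noncomputable def ellipsoid {n : ℕ} (ε : ℝ) (M : Matrix (Fin n) (Fin n) ℝ) (x : EucSp n) :
    Set (EucSp n) :=
  (fun y => x + ε • mvE (msqrt M) y) '' Metric.ball (0 : EucSp n) 1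

/-- The matrix `J_α = diag(α-1, 1, …, 1)`. -/
noncomputable def Jmat (n : ℕ) (α : ℝ) : Matrix (Fin n) (Fin n) ℝ :=
  Matrix.diagonal (fun i => if (i : ℕ) = 0 then α - 1 else 1)

/-- Reflection in the first coordinate axis. -/
noncomputable def J0 (n : ℕ) : Matrix (Fin n) (Fin n) ℝ :=
  Matrix.diagonal (fun i => if (i : ℕ) = 0 then -1 else 1)

/-- The first standard basis vector `e₁`. -/
noncomputable def e1 (n : ℕ) : EucSp n :=
  (EuclideanSpace.equiv (Fin n) ℝ).symm (fun i => if (i : ℕ) = 0 then 1 else 0)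

/-- `f₁(x,z) = C|x-z|^α + C̃|x+z|²`. -/
noncomputable def f1 {n : ℕ} (α C Ct : ℝ) (x z : EucSp n) : ℝ :=
  C * ‖x - z‖ ^ α + Ct * ‖x + z‖ ^ 2

/-- The annular step function `f₂`. -/
noncomputable def f2 {n : ℕ} (α C lam ε : ℝ) (N : ℕ) (x z : EucSp n) : ℝ :=
  if ‖x - z‖ / (Real.sqrt lam * ε) > (N : ℝ) then 0
  else C ^ (2 * (2 * N - ⌈2 * ‖x - z‖ / (Real.sqrt lam * ε)⌉₊)) * ε ^ α

/-! Write `x - z = ρ e₁` and `h = h_x - h_z`. Then `|x - z + h|^α = ρ^α (1 + 2a + m²)^(α/2)` with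
`a = ⟨e₁, h⟩/ρ` and `m = |h|/ρ ≤ 1/2`. The fourth derivative of `t ↦ t^s` is negative for
`0 ≤ s ≤ 1`, so its third-order Taylor polynomial at `1` bounds it from above; the first- and
second-order terms give the gradient and the `J_α` trace, and the cubic remainder is at most
`(5/4) m³ ρ^α`, which `ρ > N √λ ε` makes smaller than `ρ^(α-2) ε²`. The `C̃`-part is exact up to
`C̃ |h_x + h_z|² ≤ 4 C̃ Λ ε²`, and `ρ < 2r` turns this into the stated multiple of `ρ^(α-2) ε²`. -/

open Set RealInnerProductSpace

lemma le_of_hasDerivAt_of_sub_one_mul_nonneg {g g' : ℝ → ℝ} {x : ℝ} (hx : 0 < x)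
    (hg : ∀ y, 0 < y → HasDerivAt g (g' y) y) (hsign : ∀ y, 0 < y → 0 ≤ (y - 1) * g' y) :
    g 1 ≤ g x := by
  have hcont : ContinuousOn g (Ioi 0) := fun y hy => (hg y hy).continuousAt.continuousWithinAt
  rcases le_total x 1 with hx1 | hx1
  · have hanti : AntitoneOn g (Ioc 0 1) :=
      antitoneOn_of_hasDerivWithinAt_nonpos (convex_Ioc 0 1) (hcont.mono Ioc_subset_Ioi_self)
        (fun y hy => (hg y (interior_subset hy).1).hasDerivWithinAt) fun y hy => by
          rw [interior_Ioc] at hy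
          nlinarith [hsign y hy.1, hy.2]
    exact hanti ⟨hx, hx1⟩ ⟨one_pos, le_rfl⟩ hx1
  · have hmono : MonotoneOn g (Ici 1) :=
      monotoneOn_of_hasDerivWithinAt_nonneg (convex_Ici 1)
        (hcont.mono fun y (hy : 1 ≤ y) => one_pos.trans_le hy)
        (fun y hy => (hg y (one_pos.trans_le (interior_subset hy))).hasDerivWithinAt) fun y hy => by
          rw [interior_Ici] at hy
          nlinarith [hsign y (one_pos.trans hy), mem_Ioi.1 hy]
    exact hmono (mem_Ici.2 le_rfl) hx1 hx1

lemma sub_one_mul_nonpos_of_hasDerivAt_nonpos {φ φ' : ℝ → ℝ} {x : ℝ} (hx : 0 < x)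
    (hφ : ∀ y, 0 < y → HasDerivAt φ (φ' y) y) (hφ' : ∀ y, 0 < y → φ' y ≤ 0) (h1 : φ 1 = 0) :
    (x - 1) * φ x ≤ 0 := by
  have hanti : AntitoneOn φ (Ioi 0) :=
    antitoneOn_of_hasDerivWithinAt_nonpos (convex_Ioi 0)
      (fun y hy => (hφ y hy).continuousAt.continuousWithinAt)
      (fun y hy => (hφ y (interior_subset hy)).hasDerivWithinAt)
      fun y hy => hφ' y (interior_subset hy)
  rcases le_total x 1 with hx1 | hx1
  · have := hanti hx (mem_Ioi.2 one_pos) hx1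
    nlinarith
  · have := hanti (mem_Ioi.2 one_pos) hx hx1
    nlinarith

lemma sub_one_mul_rpow_sub_one_nonpos {q y : ℝ} (hq : q ≤ 0) (hy : 0 < y) :
    (y - 1) * (y ^ q - 1) ≤ 0 := by
  rcases le_total y 1 with hy1 | hy1
  · exact mul_nonpos_of_nonpos_of_nonneg (by linarith)
      (sub_nonneg.2 (Real.one_le_rpow_of_pos_of_le_one_of_nonpos hy hy1 hq))
  · exact mul_nonpos_of_nonneg_of_nonpos (by linarith)
      (sub_nonpos.2 (Real.rpow_le_one_of_one_le_of_nonpos hy1 hq))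

lemma one_add_mul_sub_one_le_rpow {p y : ℝ} (hp : p ≤ 0) (hy : 0 < y) :
    1 + p * (y - 1) ≤ y ^ p := by
  have key := le_of_hasDerivAt_of_sub_one_mul_nonneg (g := fun y => y ^ p - p * (y - 1))
    (g' := fun y => p * y ^ (p - 1) - p) hy
    (fun y hy => by
      simpa using (Real.hasDerivAt_rpow_const (p := p) (Or.inl hy.ne')).fun_sub
        (((hasDerivAt_id y).sub_const 1).const_mul p))
    fun y hy => by nlinarith [sub_one_mul_rpow_sub_one_nonpos (by linarith : p - 1 ≤ 0) hy]
  simp only [Real.one_rpow, sub_self, mul_zero, sub_zero] at key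
  linarith

lemma sub_one_mul_rpow_sub_taylor_two_nonpos {q y : ℝ} (hq : q ≤ 0) (hy : 0 < y) :
    (y - 1) * (y ^ q - (1 + q * (y - 1) + q * (q - 1) / 2 * (y - 1) ^ 2)) ≤ 0 := by
  refine sub_one_mul_nonpos_of_hasDerivAt_nonpos
    (φ := fun y => y ^ q - (1 + q * (y - 1) + q * (q - 1) / 2 * (y - 1) ^ 2))
    (φ' := fun y => q * (y ^ (q - 1) - (1 + (q - 1) * (y - 1)))) hy (fun y hy => ?_)
    (fun y hy => ?_) (by norm_num)
  · have h1 := (hasDerivAt_id' (x := y)).sub_const 1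
    refine ((Real.hasDerivAt_rpow_const (p := q) (Or.inl hy.ne')).fun_sub
      (((h1.const_mul q).const_add 1).fun_add ((h1.fun_pow 2).const_mul (q * (q - 1) / 2))))
      |>.congr_deriv ?_
    norm_num
    ring
  · exact mul_nonpos_of_nonpos_of_nonneg hq
      (sub_nonneg.2 (one_add_mul_sub_one_le_rpow (by linarith) hy))

lemma rpow_le_taylor_three {s y : ℝ} (hs0 : 0 ≤ s) (hs1 : s ≤ 1) (hy : 0 < y) :
    y ^ s ≤ 1 + s * (y - 1) + s * (s - 1) / 2 * (y - 1) ^ 2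
      + s * (s - 1) * (s - 2) / 6 * (y - 1) ^ 3 := by
  have key := le_of_hasDerivAt_of_sub_one_mul_nonneg
    (g := fun y => 1 + s * (y - 1) + s * (s - 1) / 2 * (y - 1) ^ 2
      + s * (s - 1) * (s - 2) / 6 * (y - 1) ^ 3 - y ^ s)
    (g' := fun y => -s * (y ^ (s - 1)
      - (1 + (s - 1) * (y - 1) + (s - 1) * (s - 1 - 1) / 2 * (y - 1) ^ 2))) hy
    (fun y hy => ?_) fun y hy => by
      nlinarith [sub_one_mul_rpow_sub_taylor_two_nonpos (by linarith : s - 1 ≤ 0) hy]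
  · norm_num at key
    linarith
  · have h1 := (hasDerivAt_id' (x := y)).sub_const 1
    refine ((((h1.const_mul s).const_add 1).fun_add ((h1.fun_pow 2).const_mul
      (s * (s - 1) / 2))).fun_add ((h1.fun_pow 3).const_mul (s * (s - 1) * (s - 2) / 6))).fun_sub
      (Real.hasDerivAt_rpow_const (p := s) (Or.inl hy.ne')) |>.congr_deriv ?_
    norm_num
    ring

lemma rpow_half_taylor_terms_le {α a m : ℝ} (hα0 : 0 ≤ α) (hα1 : α ≤ 1) (ha : |a| ≤ m)
    (hm : m ≤ 1 / 2) :
    α / 2 * (α / 2 - 1) / 2 * (2 * a + m ^ 2) ^ 2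
      + α / 2 * (α / 2 - 1) * (α / 2 - 2) / 6 * (2 * a + m ^ 2) ^ 3
      ≤ α * (α - 2) / 2 * a ^ 2 + 5 / 4 * m ^ 3 := by
  obtain ⟨ha1, ha2⟩ := abs_le.1 ha
  have hm0 : 0 ≤ m := (abs_nonneg a).trans ha
  have hP0 : 0 ≤ α * (2 - α) := mul_nonneg hα0 (by linarith)
  have hP1 : α * (2 - α) ≤ 1 := by nlinarith [sq_nonneg (1 - α)]
  have hQ0 : 0 ≤ α * (2 - α) * (4 - α) / 48 :=
    div_nonneg (mul_nonneg hP0 (by linarith)) (by norm_num)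
  have hQ1 : α * (2 - α) * (4 - α) / 48 ≤ 25 / 384 := by
    nlinarith [sq_nonneg (α - 27 / 32), mul_nonneg hα0 (sub_nonneg.2 hα1)]
  have hsplit : α / 2 * (α / 2 - 1) / 2 * (2 * a + m ^ 2) ^ 2
      + α / 2 * (α / 2 - 1) * (α / 2 - 2) / 6 * (2 * a + m ^ 2) ^ 3
      = α * (α - 2) / 2 * a ^ 2 - α * (2 - α) / 2 * (a * m ^ 2 + m ^ 4 / 4)
        + α * (2 - α) * (4 - α) / 48 * (2 * a + m ^ 2) ^ 3 := by
    ring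
  rw [hsplit]
  generalize α * (2 - α) * (4 - α) / 48 = Q at *
  generalize α * (2 - α) = P at *
  suffices Q * (2 * a + m ^ 2) ^ 3 ≤ 5 / 4 * m ^ 3 + P / 2 * (a * m ^ 2 + m ^ 4 / 4) by linarith
  -- For `a ≥ 0` the `P`-term has the good sign and `0 ≤ t ≤ 5m/2`, where `t = 2a + m²`;
  -- for `a ≤ 0` it costs at most `m³/2`, and `t ≤ m²` makes the cubic term negligible.
  rcases le_total 0 a with ha0 | ha0
  · have ht : 0 ≤ 2 * a + m ^ 2 := by positivity
    have ht3 : (2 * a + m ^ 2) ^ 3 ≤ (5 / 2 * m) ^ 3 := pow_le_pow_left₀ ht (by nlinarith) 3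
    have hcorr : 0 ≤ P / 2 * (a * m ^ 2 + m ^ 4 / 4) := by positivity
    nlinarith [mul_le_mul_of_nonneg_left ht3 hQ0, mul_le_mul_of_nonneg_right hQ1 (pow_nonneg hm0 3)]
  · have hcorr : 0 ≤ 5 / 8 * m ^ 3 + P / 2 * (a * m ^ 2 + m ^ 4 / 4) := by
      nlinarith [mul_le_mul_of_nonneg_right hP1 (mul_nonneg (neg_nonneg.2 ha0) (sq_nonneg m)),
        mul_nonneg hP0 (pow_nonneg hm0 4), mul_le_mul_of_nonneg_right ha1 (sq_nonneg m)]
    rcases le_total (2 * a + m ^ 2) 0 with ht | ht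
    · nlinarith [mul_nonneg hQ0 (pow_nonneg (neg_nonneg.2 ht) 3), pow_nonneg hm0 3]
    · have ht3 : (2 * a + m ^ 2) ^ 3 ≤ (m ^ 2) ^ 3 := pow_le_pow_left₀ ht (by linarith) 3
      have hm3 : (m ^ 2) ^ 3 ≤ m ^ 3 := by
        rw [← pow_mul, show m ^ (2 * 3) = m ^ 3 * m ^ 3 by ring]
        nlinarith [pow_le_one₀ hm0 (by linarith : m ≤ 1) (n := 3), pow_nonneg hm0 3]
      nlinarith [mul_le_mul_of_nonneg_left (ht3.trans hm3) hQ0,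
        mul_le_mul_of_nonneg_right hQ1 (pow_nonneg hm0 3)]

lemma one_add_two_mul_add_sq_pos {a m : ℝ} (ha : |a| ≤ m) (hm : m < 1) :
    0 < 1 + 2 * a + m ^ 2 := by
  nlinarith [neg_abs_le a]

lemma one_add_two_mul_add_sq_rpow_half_le {α a m : ℝ} (hα0 : 0 ≤ α) (hα1 : α ≤ 1)
    (ha : |a| ≤ m) (hm : m ≤ 1 / 2) :
    (1 + 2 * a + m ^ 2) ^ (α / 2)
      ≤ 1 + α * a + α / 2 * m ^ 2 + α * (α - 2) / 2 * a ^ 2 + 5 / 4 * m ^ 3 := by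
  have htaylor := rpow_le_taylor_three (s := α / 2) (by linarith) (by linarith)
    (one_add_two_mul_add_sq_pos ha (by linarith))
  rw [show 1 + 2 * a + m ^ 2 - 1 = 2 * a + m ^ 2 by ring] at htaylor
  linarith [rpow_half_taylor_terms_le hα0 hα1 ha hm]

lemma norm_smul_add_rpow_le {E : Type*} [NormedAddCommGroup E] [InnerProductSpace ℝ E]
    {u h : E} (hu : ‖u‖ = 1) {ρ α : ℝ} (hρ : 0 < ρ) (hα0 : 0 ≤ α) (hα1 : α ≤ 1)
    (hh : 2 * ‖h‖ ≤ ρ) :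
    ‖ρ • u + h‖ ^ α ≤ ρ ^ α + α * ρ ^ (α - 1) * ⟪u, h⟫
      + α / 2 * ρ ^ (α - 2) * (‖h‖ ^ 2 + (α - 2) * ⟪u, h⟫ ^ 2)
      + 5 / 4 * ρ ^ (α - 3) * ‖h‖ ^ 3 := by
  have ha : |⟪u, h⟫ / ρ| ≤ ‖h‖ / ρ := by
    rw [abs_div, abs_of_pos hρ]
    gcongr
    simpa [hu] using abs_real_inner_le_norm u h
  have hm : ‖h‖ / ρ ≤ 1 / 2 := by rw [div_le_iff₀ hρ]; linarith
  have hsq : ‖ρ • u + h‖ ^ 2 = ρ ^ 2 * (1 + 2 * (⟪u, h⟫ / ρ) + (‖h‖ / ρ) ^ 2) := by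
    rw [norm_add_sq_real, norm_smul, real_inner_smul_left, hu, Real.norm_of_nonneg hρ.le]
    field_simp
  have hpow : ‖ρ • u + h‖ ^ α = ρ ^ α * (1 + 2 * (⟪u, h⟫ / ρ) + (‖h‖ / ρ) ^ 2) ^ (α / 2) := by
    have hhalf : ∀ x : ℝ, 0 ≤ x → (x ^ 2) ^ (α / 2) = x ^ α := fun x hx => by
      rw [← Real.rpow_natCast, ← Real.rpow_mul hx]
      congr 1
      push_cast
      ring
    rw [← hhalf _ (norm_nonneg _), hsq, Real.mul_rpow (by positivity)
      (one_add_two_mul_add_sq_pos ha (by linarith)).le, hhalf _ hρ.le]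
  calc ‖ρ • u + h‖ ^ α
      ≤ ρ ^ α * (1 + α * (⟪u, h⟫ / ρ) + α / 2 * (‖h‖ / ρ) ^ 2
          + α * (α - 2) / 2 * (⟪u, h⟫ / ρ) ^ 2 + 5 / 4 * (‖h‖ / ρ) ^ 3) := by
        rw [hpow]
        gcongr
        exact one_add_two_mul_add_sq_rpow_half_le hα0 hα1 ha hm
    _ = _ := by
        simp only [Real.rpow_sub hρ, Real.rpow_one]
        norm_num
        field_simp
        ring

lemma mul_norm_smul_add_rpow_le {E : Type*} [NormedAddCommGroup E] [InnerProductSpace ℝ E]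
    {u h : E} (hu : ‖u‖ = 1) {ρ α C ε : ℝ} (hρ : 0 < ρ) (hα0 : 0 ≤ α) (hα1 : α ≤ 1)
    (hC : 0 ≤ C) (hh : 2 * ‖h‖ ≤ ρ) (hcube : 5 / 4 * C * ‖h‖ ^ 3 ≤ ρ * ε ^ 2) :
    C * ‖ρ • u + h‖ ^ α ≤ C * ρ ^ α + C * α * ρ ^ (α - 1) * ⟪u, h⟫
      + C / 2 * α * ρ ^ (α - 2) * (‖h‖ ^ 2 + (α - 2) * ⟪u, h⟫ ^ 2) + ρ ^ (α - 2) * ε ^ 2 := by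
  have herr : ρ ^ (α - 3) * (5 / 4 * C * ‖h‖ ^ 3) ≤ ρ ^ (α - 2) * ε ^ 2 := by
    rw [show α - 3 = α - 2 - 1 by ring, Real.rpow_sub hρ, Real.rpow_one, div_mul_eq_mul_div,
      div_le_iff₀ hρ, mul_assoc (ρ ^ (α - 2)) (ε ^ 2), mul_comm (ε ^ 2)]
    gcongr
  nlinarith [mul_le_mul_of_nonneg_left (norm_smul_add_rpow_le hu hρ hα0 hα1 hh) hC]

lemma sum_mul_eq_inner {n : ℕ} (v w : EucSp n) : ∑ i, v i * w i = ⟪v, w⟫ := by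
  simp [PiLp.inner_apply, mul_comm]

lemma trace_Jmat_mul_vecMulVec {n : ℕ} (α : ℝ) (v : EucSp n) :
    trace (Jmat n α * vecMulVec (fun i => v i) (fun i => v i))
      = ‖v‖ ^ 2 + (α - 2) * ⟪e1 n, v⟫ ^ 2 := by
  rw [← sum_mul_eq_inner, EuclideanSpace.real_norm_sq_eq]
  rcases n with _ | n
  · simp [trace]
  · simp [trace, Jmat, e1, Fin.sum_univ_succ, vecMulVec_apply, sq]
    ring

lemma mul_sqrt_le_mul_sqrt_of_mul_sqrt_div_le {a N lam Lam : ℝ} (hlam : 0 < lam)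
    (h : a * √(Lam / lam) ≤ N) : a * √Lam ≤ N * √lam := by
  have hsqrt : 0 < √lam := Real.sqrt_pos.2 hlam
  rw [Real.sqrt_div' _ hlam.le] at h
  calc a * √Lam = a * (√Lam / √lam) * √lam := by field_simp
    _ ≤ N * √lam := mul_le_mul_of_nonneg_right h hsqrt.le

lemma ten_le_two_rpow_seven_halves : (10 : ℝ) ≤ 2 ^ ((7 : ℝ) / 2) := by
  rw [show (7 : ℝ) / 2 = 3 + 1 / 2 by norm_num, Real.rpow_add two_pos, ← Real.sqrt_eq_rpow]
  norm_num
  nlinarith [Real.sq_sqrt (zero_le_two : (0 : ℝ) ≤ 2), Real.sqrt_nonneg 2]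

lemma two_mul_norm_le_and_cube_le {E : Type*} [NormedAddCommGroup E] {h : E}
    {lam Lam C ε N ρ : ℝ} (hlam : 0 < lam) (hlL : lam ≤ Lam) (hC : 0 ≤ C) (hε : 0 ≤ ε)
    (hN1 : 4 * √(Lam / lam) ≤ N) (hN2 : 2 ^ ((7 : ℝ) / 2) * Lam * √(Lam / lam) * C ≤ N)
    (hfar : N * √lam * ε < ρ) (hh : ‖h‖ ≤ 2 * (√Lam * ε)) :
    2 * ‖h‖ ≤ ρ ∧ 5 / 4 * C * ‖h‖ ^ 3 ≤ ρ * ε ^ 2 := by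
  have hΛ : 0 ≤ Lam := hlam.le.trans hlL
  have hρ4 : 4 * √Lam * ε < ρ :=
    (mul_le_mul_of_nonneg_right (mul_sqrt_le_mul_sqrt_of_mul_sqrt_div_le hlam hN1)
      hε).trans_lt hfar
  have hρ10 : 2 ^ ((7 : ℝ) / 2) * (Lam * C) * √Lam * ε < ρ :=
    (mul_le_mul_of_nonneg_right (mul_sqrt_le_mul_sqrt_of_mul_sqrt_div_le hlam (by linarith))
      hε).trans_lt hfar
  refine ⟨by linarith, ?_⟩
  calc 5 / 4 * C * ‖h‖ ^ 3 ≤ 5 / 4 * C * (2 * (√Lam * ε)) ^ 3 := by gcongr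
    _ = 10 * (√Lam ^ 2 * C) * √Lam * ε * ε ^ 2 := by ring
    _ ≤ ρ * ε ^ 2 := by
      rw [Real.sq_sqrt hΛ]
      gcongr
      nlinarith [mul_le_mul_of_nonneg_right ten_le_two_rpow_seven_halves
        (by positivity : 0 ≤ Lam * C * √Lam * ε)]

lemma one_le_four_mul_rpow_mul_rpow {ρ r α : ℝ} (hρ : 0 < ρ) (hρr : ρ ≤ 2 * r) (hα0 : 0 ≤ α)
    (hα2 : α ≤ 2) : 1 ≤ 4 * r ^ (2 - α) * ρ ^ (α - 2) := by
  have hr : 0 ≤ r := by linarith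
  have hcancel : ρ ^ (2 - α) * ρ ^ (α - 2) = 1 := by
    rw [← Real.rpow_add hρ, sub_add_sub_cancel', sub_self, Real.rpow_zero]
  have hle : ρ ^ (2 - α) ≤ 4 * r ^ (2 - α) :=
    calc ρ ^ (2 - α) ≤ (2 * r) ^ (2 - α) := Real.rpow_le_rpow hρ.le hρr (by linarith)
      _ = 2 ^ (2 - α) * r ^ (2 - α) := Real.mul_rpow zero_le_two hr
      _ ≤ 2 ^ (2 : ℝ) * r ^ (2 - α) := by gcongr; exacts [one_le_two, by linarith]
      _ = 4 * r ^ (2 - α) := by norm_num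
  rw [← hcancel]
  gcongr

lemma mul_norm_sq_le_rpow_mul {E : Type*} [NormedAddCommGroup E] {k : E}
    {Ct Lam ε ρ r α : ℝ} (hCt : 0 ≤ Ct) (hΛ : 0 ≤ Lam) (hk : ‖k‖ ≤ 2 * (√Lam * ε))
    (hρ : 0 < ρ) (hρr : ρ ≤ 2 * r) (hα0 : 0 ≤ α) (hα2 : α ≤ 2) :
    Ct * ‖k‖ ^ 2 ≤ 16 * Ct * Lam * r ^ (2 - α) * ρ ^ (α - 2) * ε ^ 2 :=
  calc Ct * ‖k‖ ^ 2 ≤ Ct * (4 * √Lam ^ 2 * ε ^ 2) * 1 := by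
        rw [mul_one, show 4 * √Lam ^ 2 * ε ^ 2 = (2 * (√Lam * ε)) ^ 2 by ring]
        gcongr
    _ ≤ Ct * (4 * Lam * ε ^ 2) * (4 * r ^ (2 - α) * ρ ^ (α - 2)) := by
        rw [Real.sq_sqrt hΛ]
        gcongr
        exact one_le_four_mul_rpow_mul_rpow hρ hρr hα0 hα2
    _ = 16 * Ct * Lam * r ^ (2 - α) * ρ ^ (α - 2) * ε ^ 2 := by ring

theorem stmt2_general {n : ℕ}
    (lam Lam : ℝ) (hlam : 0 < lam) (hlL : lam ≤ Lam)
    (α : ℝ) (hα : α ∈ Set.Ioo (0 : ℝ) 1)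
    (C Ct : ℝ) (hC : 0 < C) (hCt : 0 < Ct)
    (ε : ℝ) (hε : 0 < ε) (N : ℕ)
    (hN1 : (N : ℝ) ≥ 4 * Real.sqrt (Lam / lam))
    (hN2 : (N : ℝ) > 2 ^ ((7 : ℝ) / 2) * Lam * Real.sqrt (Lam / lam) * C)
    (r : ℝ)
    (x z : EucSp n)
    (hx : x ∈ Metric.ball (0 : EucSp n) r) (hz : z ∈ Metric.ball (0 : EucSp n) r)
    (hxz : ‖x - z‖⁻¹ • (x - z) = e1 n)
    (hfar : ‖x - z‖ > (N : ℝ) * Real.sqrt lam * ε) :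
    ∀ hx' hz' : EucSp n, ‖hx'‖ ≤ Real.sqrt Lam * ε → ‖hz'‖ ≤ Real.sqrt Lam * ε →
      f1 α C Ct (x + hx') (z + hz') - f1 α C Ct x z ≤
        C * α * ‖x - z‖ ^ (α - 1) * (∑ i, e1 n i * (hx' - hz') i)
          + 2 * Ct * (∑ i, (x + z) i * (hx' + hz') i)
          + C / 2 * α * ‖x - z‖ ^ (α - 2) *
              Matrix.trace (Jmat n α *
                Matrix.vecMulVec (fun i => (hx' - hz') i) (fun i => (hx' - hz') i))
          + (16 * Ct * Lam * r ^ (2 - α) + 1) * ‖x - z‖ ^ (α - 2) * ε ^ 2 := by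
  intro hx' hz' hhx hhz
  set ρ := ‖x - z‖
  have hΛ : 0 ≤ Lam := hlam.le.trans hlL
  have hρ : 0 < ρ := lt_of_le_of_lt (by positivity) hfar
  have hu : ‖e1 n‖ = 1 := by rw [← hxz, norm_smul, norm_inv, norm_norm, inv_mul_cancel₀ hρ.ne']
  have hw : x - z = ρ • e1 n := by rw [← hxz, smul_smul, mul_inv_cancel₀ hρ.ne', one_smul]
  have hρr : ρ ≤ 2 * r := (norm_sub_le x z).trans (by
    linarith [mem_ball_zero_iff.1 hx, mem_ball_zero_iff.1 hz])
  have hh : ‖hx' - hz'‖ ≤ 2 * (√Lam * ε) := (norm_sub_le _ _).trans (by linarith)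
  have hk : ‖hx' + hz'‖ ≤ 2 * (√Lam * ε) := (norm_add_le _ _).trans (by linarith)
  obtain ⟨hsmall, hcube⟩ :=
    two_mul_norm_le_and_cube_le hlam hlL hC.le hε.le hN1 hN2.le hfar hh
  have hfirst := mul_norm_smul_add_rpow_le hu hρ hα.1.le hα.2.le hC.le hsmall hcube
  have hsecond := mul_norm_sq_le_rpow_mul hCt.le hΛ hk hρ hρr hα.1.le (by linarith [hα.2])
  rw [f1, f1, show x + hx' - (z + hz') = ρ • e1 n + (hx' - hz') by rw [← hw]; abel,
    show x + hx' + (z + hz') = (x + z) + (hx' + hz') by abel, norm_add_sq_real (x + z)]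
  simp only [sum_mul_eq_inner, trace_Jmat_mul_vecMulVec]
  linarith

/-- Taylor expansion estimate for the comparison function `f₁`
(Lemma 4.1). -/
theorem stmt2 {n : ℕ} (hn : 2 ≤ n)
    (lam Lam : ℝ) (hlam : 0 < lam) (hlL : lam ≤ Lam)
    (α : ℝ) (hα : α ∈ Set.Ioo (0 : ℝ) 1)
    (C Ct : ℝ) (hC : 0 < C) (hCt : 0 < Ct)
    (ε : ℝ) (hε : 0 < ε) (N : ℕ)
    (hN1 : (N : ℝ) ≥ 4 * Real.sqrt (Lam / lam))
    (hN2 : (N : ℝ) > 2 ^ ((7 : ℝ) / 2) * Lam * Real.sqrt (Lam / lam) * C)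
    (r : ℝ) (hr : 0 < r)
    (x z : EucSp n)
    (hx : x ∈ Metric.ball (0 : EucSp n) r) (hz : z ∈ Metric.ball (0 : EucSp n) r)
    (hxz : ‖x - z‖⁻¹ • (x - z) = e1 n)
    (hfar : ‖x - z‖ > (N : ℝ) * Real.sqrt lam * ε) :
    ∀ hx' hz' : EucSp n, ‖hx'‖ ≤ Real.sqrt Lam * ε → ‖hz'‖ ≤ Real.sqrt Lam * ε →
      f1 α C Ct (x + hx') (z + hz') - f1 α C Ct x z ≤
        C * α * ‖x - z‖ ^ (α - 1) * (∑ i, e1 n i * (hx' - hz') i)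
          + 2 * Ct * (∑ i, (x + z) i * (hx' + hz') i)
          + C / 2 * α * ‖x - z‖ ^ (α - 2) *
              Matrix.trace (Jmat n α *
                Matrix.vecMulVec (fun i => (hx' - hz') i) (fun i => (hx' - hz') i))
          + (16 * Ct * Lam * r ^ (2 - α) + 1) * ‖x - z‖ ^ (α - 2) * ε ^ 2 :=
  stmt2_general lam Lam hlam hlL α hα C Ct hC hCt ε hε N hN1 hN2 r x z hx hz hxz hfar
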